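/- arXiv:2304.09815 — 7 statements merged into one kernel-verified Lean document; each statement's English description precedes it below -/
import Mathlib

section
/- Fix 0 < a < 1 and define the two-variable real polynomials P_n by P_1(X,Y) = 1 and P_{n+1}(X,Y) = P_n(X,Y)·((a−3na)·X + (a²−n−2na²)·Y) + (∂P_n/∂X)(X,Y)·(a²·X·Y + a·Y²) + (∂P_n/∂Y)(X,Y)·(a·X·Y + a²·X²). Let U ⊆ ℝ be an open interval and g : U → ℝ a continuous function such that sinh(a·g(x))·e^{g(x)} = x and g(x) ≠ M_a for every x ∈ U. Then for every n ≥ 1, g is n times differentiable on U and its n-th derivative satisfies g⁽ⁿ⁾(x) = P_n(cosh(a·g(x)), sinh(a·g(x)))·e^{−n·g(x)} / (a·cosh(a·g(x)) + sinh(a·g(x)))^{2n−1} for all x ∈ U. -/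
/-!
Away from the critical point `M_a` the derivative `(a cosh(a w) + sinh(a w)) e^w` of `f(a,·)`
does not vanish, so by the inverse function theorem a continuous inverse branch `g` satisfies
`g' = F ∘ g` with `F = 1 / ∂_w f(a,·)` smooth; hence `g` is `C^∞`. Writing `g⁽ⁿ⁾ = Φₙ ∘ g`, the
chain rule gives `Φₙ₊₁ = Φₙ' · F`, and since `cosh(a w)' = a sinh(a w)`, `sinh(a w)' = a cosh(a w)`,
the quotient rule applied to `Pₙ(cosh, sinh) e^{-n w} / (a cosh + sinh)^{2n-1}` produces exactly
the recurrence defining `Pₙ₊₁`.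
-/

/-- `f(a,w) = sinh(a·w)·e^w`. -/
noncomputable def fab (a w : ℝ) : ℝ := Real.sinh (a * w) * Real.exp w

/-- `M_a = (1/(2a))·log((1−a)/(1+a))`, the branch point of `f(a,·)`. -/
noncomputable def Ma (a : ℝ) : ℝ := (1 / (2 * a)) * Real.log ((1 - a) / (1 + a))

/-- The polynomials `P_n` of the recurrence, with the index shifted:
`Ppoly a n` is the polynomial `P_{n+1}`, so `Ppoly a 0 = P_1 = 1`. -/
noncomputable def Ppoly (a : ℝ) : ℕ → MvPolynomial (Fin 2) ℝ
  | 0 => 1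
  | n + 1 =>
      Ppoly a n *
          (MvPolynomial.C (a - 3 * ((n : ℝ) + 1) * a) * MvPolynomial.X 0 +
            MvPolynomial.C (a ^ 2 - ((n : ℝ) + 1) - 2 * ((n : ℝ) + 1) * a ^ 2) *
              MvPolynomial.X 1) +
        MvPolynomial.pderiv (0 : Fin 2) (Ppoly a n) *
          (MvPolynomial.C (a ^ 2) * MvPolynomial.X 0 * MvPolynomial.X 1 +
            MvPolynomial.C a * MvPolynomial.X 1 ^ 2) +
        MvPolynomial.pderiv (1 : Fin 2) (Ppoly a n) *
          (MvPolynomial.C a * MvPolynomial.X 0 * MvPolynomial.X 1 +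
            MvPolynomial.C (a ^ 2) * MvPolynomial.X 0 ^ 2)

open Real MvPolynomial Set Filter
open scoped ContDiff

theorem MvPolynomial.hasDerivAt_eval {σ : Type*} [Fintype σ] (P : MvPolynomial σ ℝ)
    {c : ℝ → σ → ℝ} {c' : σ → ℝ} {x : ℝ} (hc : ∀ i, HasDerivAt (fun y => c y i) (c' i) x) :
    HasDerivAt (fun y => eval (c y) P) (∑ i, eval (c x) (pderiv i P) * c' i) x := by
  classical
  induction P using MvPolynomial.induction_on with
  | C r => simpa using hasDerivAt_const x r
  | add p q hp hq => simpa [add_mul, Finset.sum_add_distrib] using hp.fun_add hq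
  | mul_X p j hp =>
    simpa [pderiv_mul, pderiv_X, add_mul, Finset.sum_add_distrib, Pi.single_apply, mul_assoc,
      mul_comm (c x j), Finset.sum_mul, add_comm, apply_ite (eval (c x)), ite_mul]
      using hp.fun_mul (hc j)

theorem contDiffOn_infty_of_hasDerivAt_comp {𝕜 : Type*} [NontriviallyNormedField 𝕜]
    {f F : 𝕜 → 𝕜} {s t : Set 𝕜} (hs : IsOpen s) (hF : ContDiffOn 𝕜 ∞ F t) (hst : MapsTo f s t)
    (hf : ∀ x ∈ s, HasDerivAt f (F (f x)) x) : ContDiffOn 𝕜 ∞ f s := by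
  refine contDiffOn_infty.mpr fun n => ?_
  induction n with
  | zero => exact contDiffOn_zero.mpr fun x hx => (hf x hx).continuousAt.continuousWithinAt
  | succ k ih =>
    rw [Nat.cast_succ, contDiffOn_succ_iff_deriv_of_isOpen hs]
    refine ⟨fun x hx => (hf x hx).differentiableAt.differentiableWithinAt, by simp, ?_⟩
    exact ((hF.of_le (by exact_mod_cast le_top)).comp ih hst).congr fun x hx => (hf x hx).deriv

theorem iteratedDerivWithin_succ_eq_of_hasDerivAt {𝕜 F : Type*} [NontriviallyNormedField 𝕜]
    [NormedAddCommGroup F] [NormedSpace 𝕜 F] {f : 𝕜 → F} {s : Set 𝕜} (hs : IsOpen s)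
    {φ : ℕ → 𝕜 → F} (hf : ∀ x ∈ s, HasDerivAt f (φ 0 x) x)
    (hφ : ∀ n, ∀ x ∈ s, HasDerivAt (φ n) (φ (n + 1) x) x) (n : ℕ) :
    ∀ x ∈ s, iteratedDerivWithin (n + 1) f s x = φ n x := by
  induction n with
  | zero =>
    intro x hx
    rw [iteratedDerivWithin_one, derivWithin_of_isOpen hs hx, (hf x hx).deriv]
  | succ k ih =>
    intro x hx
    rw [iteratedDerivWithin_succ, derivWithin_of_isOpen hs hx,
      Filter.EventuallyEq.deriv_eq (eventually_of_mem (hs.mem_nhds hx) ih), (hφ k x hx).deriv]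

theorem mul_cosh_add_sinh_ne_zero {a w : ℝ} (ha : 0 < a) (hw : w ≠ Ma a) :
    a * cosh (a * w) + sinh (a * w) ≠ 0 := by
  intro h
  -- `2 (a cosh t + sinh t) = (1 + a) eᵗ - (1 - a) e⁻ᵗ` with `t = a w`
  have hexp : exp (2 * (a * w)) = (1 - a) / (1 + a) := by
    rw [cosh_eq, sinh_eq, exp_neg] at h
    rw [eq_div_iff (by positivity), two_mul, exp_add]
    field_simp at h
    linear_combination h
  apply hw
  rw [Ma, ← hexp, log_exp]
  field_simp

theorem hasDerivAt_fab (a w : ℝ) :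
    HasDerivAt (fab a) ((a * cosh (a * w) + sinh (a * w)) * exp w) w := by
  have hsinh : HasDerivAt (fun w => sinh (a * w)) (cosh (a * w) * a) w :=
    ((hasDerivAt_id w).const_mul a).sinh.congr_deriv (by simp)
  exact (hsinh.fun_mul (hasDerivAt_exp w)).congr_deriv (by ring)

-- `branchDeriv a n (g x)` will be the `(n+1)`-st derivative of the branch `g` at `x`.
noncomputable def branchDeriv (a : ℝ) (n : ℕ) (w : ℝ) : ℝ :=
  eval ![cosh (a * w), sinh (a * w)] (Ppoly a n) * exp (-((n : ℝ) + 1) * w) /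
    (a * cosh (a * w) + sinh (a * w)) ^ (2 * n + 1)

theorem branchDeriv_zero (a w : ℝ) :
    branchDeriv a 0 w = ((a * cosh (a * w) + sinh (a * w)) * exp w)⁻¹ := by
  simp [branchDeriv, Ppoly, exp_neg, div_eq_mul_inv, mul_comm]

theorem hasDerivAt_branchDeriv (a : ℝ) (n : ℕ) {w : ℝ}
    (hw : a * cosh (a * w) + sinh (a * w) ≠ 0) :
    HasDerivAt (branchDeriv a n)
      (branchDeriv a (n + 1) w * ((a * cosh (a * w) + sinh (a * w)) * exp w)) w := by
  have hcosh : HasDerivAt (fun w => cosh (a * w)) (a * sinh (a * w)) w :=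
    ((hasDerivAt_id w).const_mul a).cosh.congr_deriv (by simp [mul_comm])
  have hsinh : HasDerivAt (fun w => sinh (a * w)) (a * cosh (a * w)) w :=
    ((hasDerivAt_id w).const_mul a).sinh.congr_deriv (by simp [mul_comm])
  have hP := (Ppoly a n).hasDerivAt_eval (c := fun w => ![cosh (a * w), sinh (a * w)])
    (c' := ![a * sinh (a * w), a * cosh (a * w)]) (fun i => by fin_cases i <;> simpa)
  have hE : HasDerivAt (fun w => exp (-((n : ℝ) + 1) * w))
      (exp (-((n : ℝ) + 1) * w) * (-((n : ℝ) + 1))) w :=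
    ((hasDerivAt_id w).const_mul _).exp.congr_deriv (by simp)
  have hD := ((hcosh.const_mul a).fun_add hsinh).fun_pow (2 * n + 1)
  refine ((hP.fun_mul hE).fun_div hD (pow_ne_zero _ hw)).congr_deriv ?_
  have hexp : exp (-((n : ℝ) + 1 + 1) * w) = exp (-((n : ℝ) + 1) * w) / exp w := by
    rw [← exp_sub]; ring_nf
  simp only [branchDeriv, Ppoly, Fin.sum_univ_two, map_add, map_mul, map_pow, eval_C, eval_X,
    Matrix.cons_val_zero, Matrix.cons_val_one, Nat.add_sub_cancel]
  push_cast
  rw [hexp]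
  field_simp
  ring

theorem stmt_1_general (a p q : ℝ) (ha0 : 0 < a) (g : ℝ → ℝ)
    (hg : ContinuousOn g (Set.Ioo p q))
    (hinv : ∀ x ∈ Set.Ioo p q, Real.sinh (a * g x) * Real.exp (g x) = x)
    (hM : ∀ x ∈ Set.Ioo p q, g x ≠ Ma a) :
    ∀ n : ℕ, 1 ≤ n →
      ContDiffOn ℝ n g (Set.Ioo p q) ∧
      ∀ x ∈ Set.Ioo p q,
        iteratedDerivWithin n g (Set.Ioo p q) x =
          MvPolynomial.eval ![Real.cosh (a * g x), Real.sinh (a * g x)] (Ppoly a (n - 1)) *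
              Real.exp (-(n : ℝ) * g x) /
            (a * Real.cosh (a * g x) + Real.sinh (a * g x)) ^ (2 * n - 1) := by
  have hmaps : MapsTo g (Ioo p q) {w | a * cosh (a * w) + sinh (a * w) ≠ 0} := fun x hx =>
    mul_cosh_add_sinh_ne_zero ha0 (hM x hx)
  have hderiv (x) (hx : x ∈ Ioo p q) : HasDerivAt g (branchDeriv a 0 (g x)) x := by
    rw [branchDeriv_zero]
    exact (hasDerivAt_fab a (g x)).of_local_left_inverse
      (hg.continuousAt (isOpen_Ioo.mem_nhds hx)) (mul_ne_zero (hmaps hx) (exp_ne_zero _))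
      (eventually_of_mem (isOpen_Ioo.mem_nhds hx) hinv)
  have hsmooth : ContDiffOn ℝ ∞ g (Ioo p q) := by
    refine contDiffOn_infty_of_hasDerivAt_comp isOpen_Ioo ?_ hmaps hderiv
    exact (ContDiffOn.inv (by fun_prop) fun w hw => mul_ne_zero hw (exp_ne_zero w)).congr
      fun w _ => branchDeriv_zero a w
  have hiter (n : ℕ) : ∀ x ∈ Ioo p q,
      iteratedDerivWithin (n + 1) g (Ioo p q) x = branchDeriv a n (g x) := by
    refine iteratedDerivWithin_succ_eq_of_hasDerivAt (φ := fun n x => branchDeriv a n (g x))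
      isOpen_Ioo hderiv (fun n x hx => ?_) n
    refine ((hasDerivAt_branchDeriv a n (hmaps hx)).comp x (hderiv x hx)).congr_deriv ?_
    rw [branchDeriv_zero, mul_inv_cancel_right₀ (mul_ne_zero (hmaps hx) (exp_ne_zero _))]
  intro n hn
  obtain ⟨m, rfl⟩ := Nat.exists_eq_add_of_le' hn
  refine ⟨hsmooth.of_le (by exact_mod_cast le_top), fun x hx => ?_⟩
  rw [hiter m x hx, branchDeriv, Nat.add_sub_cancel, show 2 * (m + 1) - 1 = 2 * m + 1 by omega]
  push_cast
  ring_nf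

/-- Any continuous inverse branch `g` of `f(a,·)` on an open interval avoiding the
branch point `M_a` is `n` times differentiable, with `n`-th derivative given by
`P_n(cosh(a g x), sinh(a g x))·e^{−n g x}/(a cosh(a g x)+sinh(a g x))^{2n−1}`. -/
theorem stmt_1 (a p q : ℝ) (ha0 : 0 < a) (ha1 : a < 1) (g : ℝ → ℝ)
    (hg : ContinuousOn g (Set.Ioo p q))
    (hinv : ∀ x ∈ Set.Ioo p q, Real.sinh (a * g x) * Real.exp (g x) = x)
    (hM : ∀ x ∈ Set.Ioo p q, g x ≠ Ma a) :
    ∀ n : ℕ, 1 ≤ n →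
      ContDiffOn ℝ n g (Set.Ioo p q) ∧
      ∀ x ∈ Set.Ioo p q,
        iteratedDerivWithin n g (Set.Ioo p q) x =
          MvPolynomial.eval ![Real.cosh (a * g x), Real.sinh (a * g x)] (Ppoly a (n - 1)) *
              Real.exp (-(n : ℝ) * g x) /
            (a * Real.cosh (a * g x) + Real.sinh (a * g x)) ^ (2 * n - 1) :=
  stmt_1_general a p q ha0 g hg hinv hM
end

section
/- Fix 0 < a < 1. Let U ⊆ ℝ be an open interval with 0 ∉ U, and let g : U → ℝ be a continuous function such that sinh(a·g(x))·e^{g(x)} = x and g(x) ≠ M_a for every x ∈ U. Then the function Ψ(x) = x·g(x) − x/(1−a²) + (a·x/(1−a²))·coth(a·g(x)) is differentiable on U with Ψ′(x) = g(x) for all x ∈ U; that is, Ψ is a primitive function of the branch g. -/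
/-!
Write `f(w) = sinh(a·w)·e^w`. On the branch, `x = f(g x)`, so `x·coth(a·g x) = cosh(a·g x)·e^{g x}`
and `Ψ = Φ ∘ g` with `Φ(w) = w·f(w) + (a·cosh(a·w) − sinh(a·w))·e^w/(1−a²)`, a function free of
`coth`. A direct computation gives `Φ'(w) = w·f'(w)`, while the inverse function theorem gives
`g' = 1/f'(g)`: `f'(w) = (a·cosh(a·w) + sinh(a·w))·e^w` vanishes only at `w = M_a`. Hence
`Ψ' = Φ'(g)·g' = g`.
-/

open Real Filter Topology

theorem hasDerivAt_sinh_mul_exp (a w : ℝ) :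
    HasDerivAt (fun w => sinh (a * w) * exp w)
      ((a * cosh (a * w) + sinh (a * w)) * exp w) w :=
  (((hasDerivAt_id' w).const_mul a).sinh.mul (hasDerivAt_exp w)).congr_deriv (by ring)

theorem hasDerivAt_mul_sinh_mul_exp_add {a : ℝ} (ha : a ^ 2 ≠ 1) (w : ℝ) :
    HasDerivAt
      (fun w => w * (sinh (a * w) * exp w) +
        (a * cosh (a * w) - sinh (a * w)) * exp w / (1 - a ^ 2))
      (w * ((a * cosh (a * w) + sinh (a * w)) * exp w)) w := by
  have hcosh := ((hasDerivAt_id' w).const_mul a).cosh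
  have hsinh := ((hasDerivAt_id' w).const_mul a).sinh
  refine (((hasDerivAt_id' w).mul (hasDerivAt_sinh_mul_exp a w)).add
    ((((hcosh.const_mul a).sub hsinh).mul (hasDerivAt_exp w)).div_const (1 - a ^ 2))).congr_deriv ?_
  have : 1 - a ^ 2 ≠ 0 := sub_ne_zero.mpr (Ne.symm ha)
  simp only [Pi.sub_apply]
  field_simp
  ring

theorem eq_Ma_of_mul_cosh_add_sinh_eq_zero {a w : ℝ} (ha : a ≠ 0)
    (h : a * cosh (a * w) + sinh (a * w) = 0) : w = Ma a := by
  have hexp : exp (2 * (a * w)) * (1 + a) = 1 - a := by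
    rw [cosh_eq, sinh_eq, exp_neg] at h
    have hpos := exp_pos (a * w)
    rw [two_mul, exp_add]
    field_simp at h
    linear_combination h
  have h1a : 1 + a ≠ 0 := by
    intro h1a
    rw [h1a, mul_zero] at hexp
    linarith
  have hlog : 2 * (a * w) = log ((1 - a) / (1 + a)) := by
    rw [← hexp, mul_div_cancel_right₀ _ h1a, log_exp]
  rw [Ma, ← hlog]
  field_simp

theorem mul_cosh_add_sinh_mul_exp_ne_zero {a w : ℝ} (ha : a ≠ 0) (hw : w ≠ Ma a) :
    (a * cosh (a * w) + sinh (a * w)) * exp w ≠ 0 :=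
  mul_ne_zero (fun h => hw (eq_Ma_of_mul_cosh_add_sinh_eq_zero ha h)) (exp_pos w).ne'

theorem mul_coth_eq_cosh_mul_exp {a w y : ℝ} (hy : y ≠ 0) (h : sinh (a * w) * exp w = y) :
    y * (cosh (a * w) / sinh (a * w)) = cosh (a * w) * exp w := by
  have hs : sinh (a * w) ≠ 0 := fun hs => hy (by rw [← h, hs, zero_mul])
  rw [← h]
  field_simp

/-- For a continuous inverse branch `g` of `w ↦ sinh(a·w)·e^w` on an open interval
not containing `0` and avoiding the branch point `M_a`, the function
`Ψ(x) = x·g(x) − x/(1−a²) + (a·x/(1−a²))·coth(a·g(x))` is a primitive of `g`. -/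
theorem stmt_2 (a p q : ℝ) (ha0 : 0 < a) (ha1 : a < 1)
    (h0 : (0 : ℝ) ∉ Set.Ioo p q) (g : ℝ → ℝ)
    (hg : ContinuousOn g (Set.Ioo p q))
    (hinv : ∀ x ∈ Set.Ioo p q, Real.sinh (a * g x) * Real.exp (g x) = x)
    (hM : ∀ x ∈ Set.Ioo p q, g x ≠ Ma a) :
    ∀ x ∈ Set.Ioo p q,
      HasDerivAt (fun t => t * g t - t / (1 - a ^ 2) +
          (a * t / (1 - a ^ 2)) * (Real.cosh (a * g t) / Real.sinh (a * g t)))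
        (g x) x := by
  intro x hx
  have hU : Set.Ioo p q ∈ 𝓝 x := Ioo_mem_nhds hx.1 hx.2
  have ha2 : a ^ 2 ≠ 1 := by nlinarith
  have hf' := mul_cosh_add_sinh_mul_exp_ne_zero ha0.ne' (hM x hx)
  have hg' := HasDerivAt.of_local_left_inverse (hg.continuousAt hU)
    (hasDerivAt_sinh_mul_exp a (g x)) hf' (eventually_of_mem hU hinv)
  refine (((hasDerivAt_mul_sinh_mul_exp_add ha2 (g x)).comp x hg').congr_of_eventuallyEq ?_
    ).congr_deriv (mul_inv_cancel_right₀ hf' _)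
  filter_upwards [hU] with y hy
  have hy0 : y ≠ 0 := fun h => h0 (h ▸ hy)
  have hcoth := mul_coth_eq_cosh_mul_exp hy0 (hinv y hy)
  simp only [Function.comp_apply]
  linear_combination (a / (1 - a ^ 2)) * hcoth + (1 / (1 - a ^ 2) - g y) * hinv y hy
end

section
/- For 0 < a < 1, the integral of the principal branch over [L_a, 0] equals ∫_{L_a}^{0} ψ₀(a,x) dx = (a + 2·L_a)/(1 − a²) − L_a·M_a. -/
/-- `L_a = −(a/√(1−a²))·((1−a)/(1+a))^{1/(2a)}`, the minimum value of `f(a,·)`. -/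
noncomputable def La (a : ℝ) : ℝ :=
  -(a / Real.sqrt (1 - a ^ 2)) * ((1 - a) / (1 + a)) ^ (1 / (2 * a))

/-!
Substituting `x = f(a,w)` with `w ∈ [M_a, 0]`, on which `f(a,·)` increases from `L_a` to `0`,
turns the integral into `∫_{M_a}^0 w ∂_w f(a,w) dw`. Integrating by parts against the primitive
`F(w) = e^w (sinh(a w) − a cosh(a w)) / (1 − a²)` of `f(a,·)` evaluates it. At `w = M_a` one has
`e^{2 a M_a} = (1 − a)/(1 + a)`, i.e. `sinh(a M_a) = −a cosh(a M_a)`, and then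
`cosh(a M_a) = 1/√(1 − a²)`, which produces `L_a` and `F(M_a) = 2 L_a / (1 − a²)`.
-/

open Real Set

noncomputable def fabDeriv (a w : ℝ) : ℝ := exp w * (sinh (a * w) + a * cosh (a * w))

noncomputable def fabPrimitive (a w : ℝ) : ℝ :=
  exp w * (sinh (a * w) - a * cosh (a * w)) / (1 - a ^ 2)

section

variable {a : ℝ}

lemma hasDerivAt_fab_s3 (a w : ℝ) : HasDerivAt (fab a) (fabDeriv a w) w :=
  (((hasDerivAt_id' w).const_mul a).sinh.mul (hasDerivAt_exp w)).congr_deriv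
    (by rw [fabDeriv]; ring)

lemma continuous_fab (a : ℝ) : Continuous (fab a) := by
  unfold fab
  fun_prop

lemma hasDerivAt_fabPrimitive (ha : 1 - a ^ 2 ≠ 0) (w : ℝ) :
    HasDerivAt (fabPrimitive a) (fab a w) w := by
  have hsinh := ((hasDerivAt_id' w).const_mul a).sinh
  have hcosh := ((hasDerivAt_id' w).const_mul a).cosh
  refine (((hasDerivAt_exp w).fun_mul (hsinh.fun_sub (hcosh.const_mul a))).div_const
    (1 - a ^ 2)).congr_deriv ?_
  rw [fab]
  field_simp
  ring

lemma integral_mul_fabDeriv (ha : 1 - a ^ 2 ≠ 0) (b c : ℝ) :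
    ∫ w in b..c, w * fabDeriv a w =
      (c * fab a c - fabPrimitive a c) - (b * fab a b - fabPrimitive a b) := by
  refine intervalIntegral.integral_eq_sub_of_hasDerivAt
    (f := fun w => w * fab a w - fabPrimitive a w) (fun w _ => ?_) ?_
  · exact (((hasDerivAt_id' w).fun_mul (hasDerivAt_fab_s3 a w)).fun_sub
      (hasDerivAt_fabPrimitive ha w)).congr_deriv (by ring)
  · exact Continuous.intervalIntegrable (by unfold fabDeriv; fun_prop) b c

lemma strictMono_sinh_add_mul_cosh (h₁ : -1 < a) (h₂ : a < 1) :
    StrictMono fun t => sinh t + a * cosh t := by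
  intro s t hst
  have hexp : exp s < exp t := exp_lt_exp.mpr hst
  have hexp_neg : exp (-t) < exp (-s) := exp_lt_exp.mpr (neg_lt_neg hst)
  simp only [sinh_eq, cosh_eq]
  nlinarith

lemma exp_two_mul_mul_Ma (ha0 : 0 < a) (ha1 : a < 1) :
    exp (2 * (a * Ma a)) = (1 - a) / (1 + a) := by
  rw [Ma, show 2 * (a * (1 / (2 * a) * log ((1 - a) / (1 + a)))) = log ((1 - a) / (1 + a)) by
    field_simp]
  exact exp_log (div_pos (by linarith) (by linarith))

lemma sinh_add_mul_cosh_mul_Ma (ha0 : 0 < a) (ha1 : a < 1) :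
    sinh (a * Ma a) + a * cosh (a * Ma a) = 0 := by
  have h := exp_two_mul_mul_Ma ha0 ha1
  have hsq : exp (2 * (a * Ma a)) = exp (a * Ma a) * exp (a * Ma a) := by
    rw [← exp_add]; ring_nf
  rw [sinh_eq, cosh_eq, exp_neg]
  rw [hsq, eq_div_iff (by linarith)] at h
  field_simp
  linear_combination h

lemma cosh_mul_Ma (ha0 : 0 < a) (ha1 : a < 1) : cosh (a * Ma a) = 1 / √(1 - a ^ 2) := by
  have hsinh : sinh (a * Ma a) = -(a * cosh (a * Ma a)) := by
    linarith [sinh_add_mul_cosh_mul_Ma ha0 ha1]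
  have hcosh := cosh_pos (a * Ma a)
  have h : 1 - a ^ 2 = (1 / cosh (a * Ma a)) ^ 2 := by
    field_simp
    linear_combination cosh_sq_sub_sinh_sq (a * Ma a) +
      (sinh (a * Ma a) - a * cosh (a * Ma a)) * hsinh
  rw [h, sqrt_sq (by positivity), one_div_one_div]

lemma fab_Ma (ha0 : 0 < a) (ha1 : a < 1) : fab a (Ma a) = La a := by
  have hexp : ((1 - a) / (1 + a)) ^ (1 / (2 * a)) = exp (Ma a) := by
    rw [rpow_def_of_pos (div_pos (by linarith) (by linarith)), Ma, mul_comm]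
  rw [fab, La, hexp, show sinh (a * Ma a) = -(a * cosh (a * Ma a)) by
    linarith [sinh_add_mul_cosh_mul_Ma ha0 ha1], cosh_mul_Ma ha0 ha1]
  ring

lemma fabPrimitive_Ma (ha0 : 0 < a) (ha1 : a < 1) :
    fabPrimitive a (Ma a) = 2 * La a / (1 - a ^ 2) := by
  rw [← fab_Ma ha0 ha1, fabPrimitive, fab, show a * cosh (a * Ma a) = -sinh (a * Ma a) by
    linarith [sinh_add_mul_cosh_mul_Ma ha0 ha1]]
  ring

lemma Ma_neg (ha0 : 0 < a) (ha1 : a < 1) : Ma a < 0 := by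
  have hlog : log ((1 - a) / (1 + a)) < 0 :=
    log_neg (div_pos (by linarith) (by linarith)) ((div_lt_one (by linarith)).mpr (by linarith))
  rw [Ma]
  exact mul_neg_of_pos_of_neg (by positivity) hlog

lemma fabDeriv_pos (ha0 : 0 < a) (ha1 : a < 1) {w : ℝ} (hw : Ma a < w) :
    0 < fabDeriv a w := by
  have h := strictMono_sinh_add_mul_cosh (by linarith) ha1 (mul_lt_mul_of_pos_left hw ha0)
  simp only [sinh_add_mul_cosh_mul_Ma ha0 ha1] at h
  exact mul_pos (exp_pos w) h

lemma strictMonoOn_fab (ha0 : 0 < a) (ha1 : a < 1) : StrictMonoOn (fab a) (Ici (Ma a)) := by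
  refine strictMonoOn_of_deriv_pos (convex_Ici _) (continuous_fab a).continuousOn fun w hw => ?_
  rw [interior_Ici] at hw
  rw [(hasDerivAt_fab_s3 a w).deriv]
  exact fabDeriv_pos ha0 ha1 hw

end

/-- The integral of the principal branch `ψ₀(a,·)` over `[L_a, 0]`. -/
theorem stmt_3 (a : ℝ) (ha0 : 0 < a) (ha1 : a < 1) (psi0 : ℝ → ℝ)
    (hpsi0 : ∀ x, La a ≤ x → Ma a ≤ psi0 x ∧ fab a (psi0 x) = x) :
    ∫ x in La a..0, psi0 x = (a + 2 * La a) / (1 - a ^ 2) - La a * Ma a := by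
  have hM := Ma_neg ha0 ha1
  have hmono := strictMonoOn_fab ha0 ha1
  have hpsi0_fab : ∀ w, Ma a ≤ w → psi0 (fab a w) = w := fun w hw => by
    have hL : La a ≤ fab a w := fab_Ma ha0 ha1 ▸ hmono.monotoneOn self_mem_Ici hw hw
    exact hmono.injOn (hpsi0 _ hL).1 hw (hpsi0 _ hL).2
  have hsubst := intervalIntegral.integral_comp_mul_deriv_of_deriv_nonneg (a := Ma a) (b := 0)
    (g := psi0) (continuous_fab a).continuousOn (fun w _ => hasDerivAt_fab_s3 a w)
    (fun w hw => (fabDeriv_pos ha0 ha1 (by simpa only [min_eq_left hM.le] using hw.1)).le)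
  rw [fab_Ma ha0 ha1, show fab a 0 = 0 by simp [fab]] at hsubst
  have ha : 1 - a ^ 2 ≠ 0 := by nlinarith
  rw [← hsubst, intervalIntegral.integral_congr (g := fun w => w * fabDeriv a w),
    integral_mul_fabDeriv ha, fab_Ma ha0 ha1, fabPrimitive_Ma ha0 ha1]
  · simp only [fab, fabPrimitive, mul_zero, exp_zero, sinh_zero, cosh_zero]
    field_simp
    ring
  · intro w hw
    rw [uIcc_of_le hM.le] at hw
    simp only [Function.comp_apply, hpsi0_fab w hw.1]
end

section
/- For every z < 0, the transition function at a = 1/3 is given explicitly by ω(1/3, z) = (3/2)·log(1 − e^{2z/3}). Equivalently, for z < 0 the number y = (3/2)·log(1 − e^{2z/3}) satisfies sinh(y/3)·e^y = sinh(z/3)·e^z, and y ≥ M_{1/3} when z ≤ M_{1/3} while y ≤ M_{1/3} when M_{1/3} ≤ z < 0, where M_{1/3} = −(3/2)·log 2. -/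
/-!
In the variable `t = e^{2w/3}` one has `f(1/3, w) = (t² − t)/2`, a parabola symmetric about
`t = 1/2`, i.e. about `w = M_{1/3}`. Hence the point on the other side of `M_{1/3}` with the same
value of `f` as `z` is the `y` with `e^{2y/3} = 1 − e^{2z/3}`, and injectivity of `f(1/3,·)` on
either side of `M_{1/3}` identifies it with `ω(1/3, z)`.
-/

open Real Set

noncomputable def expTwoThirds (w : ℝ) : ℝ := exp (2 * w / 3)

lemma expTwoThirds_strictMono : StrictMono expTwoThirds :=
  exp_strictMono.comp fun _ _ h ↦ by linarith

lemma expTwoThirds_lt_one {w : ℝ} (hw : w < 0) : expTwoThirds w < 1 :=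
  exp_lt_one_iff.mpr (by linarith)

lemma expTwoThirds_three_halves_mul_log {x : ℝ} (hx : 0 < x) :
    expTwoThirds (3 / 2 * log x) = x := by
  rw [expTwoThirds, show 2 * (3 / 2 * log x) / 3 = log x by ring, exp_log hx]

lemma Ma_one_third : Ma (1 / 3) = -(3 / 2) * log 2 := by
  rw [Ma, show ((1 : ℝ) - 1 / 3) / (1 + 1 / 3) = 2⁻¹ by norm_num, log_inv]
  ring

lemma expTwoThirds_Ma_one_third : expTwoThirds (Ma (1 / 3)) = 1 / 2 := by
  rw [Ma_one_third, show -(3 / 2) * log 2 = 3 / 2 * log (1 / 2) by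
    rw [one_div, log_inv]; ring]
  exact expTwoThirds_three_halves_mul_log (by norm_num)

lemma expTwoThirds_le_half_iff {w : ℝ} : expTwoThirds w ≤ 1 / 2 ↔ w ≤ Ma (1 / 3) := by
  rw [← expTwoThirds_Ma_one_third, expTwoThirds_strictMono.le_iff_le]

lemma half_le_expTwoThirds_iff {w : ℝ} : 1 / 2 ≤ expTwoThirds w ↔ Ma (1 / 3) ≤ w := by
  rw [← expTwoThirds_Ma_one_third, expTwoThirds_strictMono.le_iff_le]

lemma fab_one_third (w : ℝ) : fab (1 / 3) w = (expTwoThirds w ^ 2 - expTwoThirds w) / 2 := by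
  rw [fab, sinh_eq, expTwoThirds, sq, ← exp_add, div_mul_eq_mul_div, sub_mul,
    ← exp_add, ← exp_add]
  ring_nf

lemma fab_neg {a w : ℝ} (ha : 0 < a) (hw : w < 0) : fab a w < 0 :=
  mul_neg_of_neg_of_pos (sinh_neg_iff.mpr (mul_neg_of_pos_of_neg ha hw)) (exp_pos w)

lemma La_one_third : La (1 / 3) = -1 / 8 := by
  have hsqrt : √(1 - (1 / 3 : ℝ) ^ 2) = 2 * √2 / 3 := by
    rw [show 1 - (1 / 3 : ℝ) ^ 2 = (2 / 3) ^ 2 * 2 by norm_num, sqrt_mul (by positivity),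
      sqrt_sq (by norm_num)]
    ring
  have hrpow : (1 / 2 : ℝ) ^ (3 / 2 : ℝ) = 1 / (2 * √2) := by
    rw [show (3 / 2 : ℝ) = 1 + 1 / 2 by norm_num, rpow_add (by norm_num), rpow_one,
      ← sqrt_eq_rpow, sqrt_div' _ (by norm_num : (0 : ℝ) ≤ 2), sqrt_one]
    field_simp
  have hsqrt2 : √2 ≠ 0 := by positivity
  rw [La, hsqrt, show ((1 : ℝ) - 1 / 3) / (1 + 1 / 3) = 1 / 2 by norm_num,
    show (1 : ℝ) / (2 * (1 / 3)) = 3 / 2 by norm_num, hrpow]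
  field_simp
  rw [sq_sqrt (by norm_num)]
  ring

lemma La_one_third_le_fab (w : ℝ) : La (1 / 3) ≤ fab (1 / 3) w := by
  rw [La_one_third, fab_one_third]
  nlinarith [sq_nonneg (expTwoThirds w - 1 / 2)]

lemma fab_one_third_eq_iff {u v : ℝ} :
    fab (1 / 3) u = fab (1 / 3) v ↔ u = v ∨ expTwoThirds u + expTwoThirds v = 1 := by
  set s := expTwoThirds u
  set t := expTwoThirds v
  have hfactor : (s ^ 2 - s) / 2 = (t ^ 2 - t) / 2 ↔ (s - t) * (s + t - 1) = 0 := by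
    constructor <;> intro h
    · linear_combination 2 * h
    · linear_combination h / 2
  rw [fab_one_third, fab_one_third, hfactor, mul_eq_zero, sub_eq_zero, sub_eq_zero,
    expTwoThirds_strictMono.injective.eq_iff]

lemma fab_one_third_injOn_Ici : InjOn (fab (1 / 3)) (Ici (Ma (1 / 3))) := by
  intro u hu v hv huv
  rcases fab_one_third_eq_iff.mp huv with h | hsum
  · exact h
  · have hu' := half_le_expTwoThirds_iff.mpr hu
    have hv' := half_le_expTwoThirds_iff.mpr hv
    exact expTwoThirds_strictMono.injective (by linarith)

lemma fab_one_third_injOn_Iic : InjOn (fab (1 / 3)) (Iic (Ma (1 / 3))) := by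
  intro u hu v hv huv
  rcases fab_one_third_eq_iff.mp huv with h | hsum
  · exact h
  · have hu' := expTwoThirds_le_half_iff.mpr hu
    have hv' := expTwoThirds_le_half_iff.mpr hv
    exact expTwoThirds_strictMono.injective (by linarith)

lemma le_Ma_one_third_iff_of_add_eq_one {w w' : ℝ}
    (h : expTwoThirds w + expTwoThirds w' = 1) : w ≤ Ma (1 / 3) ↔ Ma (1 / 3) ≤ w' := by
  rw [← expTwoThirds_le_half_iff, ← half_le_expTwoThirds_iff]
  constructor <;> intro <;> linarith

/-- For `z < 0`, the transition function at `a = 1/3` is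
`ω(1/3,z) = (3/2)·log(1 − e^{2z/3})`; equivalently `y = (3/2)·log(1 − e^{2z/3})`
satisfies `sinh(y/3)·e^y = sinh(z/3)·e^z` and lies on the opposite side of
`M_{1/3} = −(3/2)·log 2` from `z`. -/
theorem stmt_8 (psi0 psi1 : ℝ → ℝ)
    (hpsi0 : ∀ x, La (1/3) ≤ x → Ma (1/3) ≤ psi0 x ∧ fab (1/3) (psi0 x) = x)
    (hpsi1 : ∀ x, La (1/3) ≤ x → x < 0 → psi1 x ≤ Ma (1/3) ∧ fab (1/3) (psi1 x) = x)
    (z : ℝ) (hz : z < 0) :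
    let M : ℝ := -(3 / 2) * Real.log 2
    let y : ℝ := (3 / 2) * Real.log (1 - Real.exp (2 * z / 3))
    (if z < Ma (1/3) then psi0 (fab (1/3) z) else psi1 (fab (1/3) z)) = y ∧
    Real.sinh (y / 3) * Real.exp y = Real.sinh (z / 3) * Real.exp z ∧
    (z ≤ M → M ≤ y) ∧ (M ≤ z → y ≤ M) := by
  intro M y
  have hy : expTwoThirds y = 1 - expTwoThirds z :=
    expTwoThirds_three_halves_mul_log (sub_pos.mpr (expTwoThirds_lt_one hz))
  have hreflect : expTwoThirds z + expTwoThirds y = 1 := by rw [hy]; ring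
  have hswap := le_Ma_one_third_iff_of_add_eq_one hreflect
  have hswap' := le_Ma_one_third_iff_of_add_eq_one ((add_comm _ _).trans hreflect)
  have hfy : fab (1 / 3) y = fab (1 / 3) z := fab_one_third_eq_iff.mpr (.inr (by linarith))
  have hM : Ma (1 / 3) = M := Ma_one_third
  refine ⟨?_, by simpa only [fab, one_div, inv_mul_eq_div] using hfy,
    by rw [← hM]; exact hswap.mp, by rw [← hM]; exact hswap'.mpr⟩
  split_ifs with hzM
  · obtain ⟨hge, heq⟩ := hpsi0 _ (La_one_third_le_fab z)
    exact fab_one_third_injOn_Ici hge (hswap.mp hzM.le) (heq.trans hfy.symm)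
  · obtain ⟨hle, heq⟩ := hpsi1 _ (La_one_third_le_fab z) (fab_neg (by norm_num) hz)
    exact fab_one_third_injOn_Iic hle (hswap'.mpr (not_lt.mp hzM)) (heq.trans hfy.symm)
end

section
/- For a = 1/2 (so M_{1/2} = −log 3 and L_{1/2} = −√3/9): (i) for −√3/9 < x < √3/9 the number w₀ = 2·log((2/√3)·cos(arccos(3√3·x)/3)) satisfies w₀ ≥ M_{1/2} and sinh(w₀/2)·e^{w₀} = x, i.e. ψ₀(1/2,x) = w₀; (ii) for −√3/9 < x < 0 the number w₋ = 2·log((2/√3)·cos((arccos(3√3·x) + 4π)/3)) satisfies w₋ ≤ M_{1/2} and sinh(w₋/2)·e^{w₋} = x, i.e. ψ₋₁(1/2,x) = w₋. -/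
/-!
Put `t = e^{w/2}`. Then `f(1/2, w) = (t³ - t)/2`, and `w ≥ -log 3` exactly when `3t² ≥ 1`, i.e. on
each side of `M_{1/2}` the function `f(1/2,·)` is a strictly monotone cubic in `t`. Viète's substitution
`t = (2/√3) cos θ` turns the cubic into `cos 3θ / (3√3)`, so `cos 3θ = 3√3 x` is solved by the two
angles in the statement; the first gives `cos θ ≥ 1/2` (the branch `3t² ≥ 1`), the second
`0 < cos θ ≤ 1/2` (the branch `3t² ≤ 1`), and injectivity on each branch identifies them with `ψ₀`, `ψ₋₁`.
-/

open Real Set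

lemma Ma_half : Ma (1 / 2) = -log 3 := by
  rw [Ma, show ((1 : ℝ) - 1 / 2) / (1 + 1 / 2) = 3⁻¹ by norm_num, log_inv]
  ring

lemma La_half : La (1 / 2) = -(√3 / 9) := by
  have h : √(1 - (1 / 2 : ℝ) ^ 2) = √3 / 2 := by
    rw [show 1 - (1 / 2 : ℝ) ^ 2 = 3 / 2 ^ 2 by norm_num, sqrt_div' _ (by positivity),
      sqrt_sq zero_le_two]
  rw [La, h, show (1 : ℝ) / (2 * (1 / 2)) = 1 by norm_num, rpow_one]
  have h3 : √3 ^ 2 = 3 := sq_sqrt zero_le_three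
  field_simp
  linear_combination 3 * h3

lemma fab_half_apply (w : ℝ) : fab (1 / 2) w = sinh (w / 2) * exp w := by
  rw [fab, one_div_mul_eq_div]

lemma exp_half_sq (w : ℝ) : exp (w / 2) ^ 2 = exp w := by
  rw [← exp_nat_mul]
  congr 1
  push_cast
  ring

lemma fab_half_eq_cubic (w : ℝ) : fab (1 / 2) w = (exp (w / 2) ^ 3 - exp (w / 2)) / 2 := by
  have ht : exp (w / 2) ≠ 0 := (exp_pos _).ne'
  rw [fab_half_apply, sinh_eq, exp_neg, ← exp_half_sq w]
  generalize exp (w / 2) = t at ht ⊢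
  field_simp

lemma neg_log_three_le_iff (w : ℝ) : -log 3 ≤ w ↔ 1 ≤ 3 * exp (w / 2) ^ 2 := by
  rw [exp_half_sq, ← exp_le_exp, exp_neg, exp_log three_pos, inv_le_iff_one_le_mul₀' three_pos]

lemma le_neg_log_three_iff (w : ℝ) : w ≤ -log 3 ↔ 3 * exp (w / 2) ^ 2 ≤ 1 := by
  rw [exp_half_sq, ← exp_le_exp, exp_neg, exp_log three_pos, inv_eq_one_div, le_div_iff₀' three_pos]

lemma cubic_lt_cubic_of_one_le {s t : ℝ} (hs₀ : 0 < s) (hs : 1 ≤ 3 * s ^ 2) (hst : s < t) :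
    s ^ 3 - s < t ^ 3 - t := by
  have hmid : 1 < s ^ 2 + s * t + t ^ 2 := by nlinarith
  nlinarith [mul_lt_mul_of_pos_left hmid (sub_pos.mpr hst)]

lemma cubic_lt_cubic_of_le_one {s t : ℝ} (hs₀ : 0 ≤ s) (ht : 3 * t ^ 2 ≤ 1) (hst : s < t) :
    t ^ 3 - t < s ^ 3 - s := by
  have hmid : s ^ 2 + s * t + t ^ 2 < 1 := by nlinarith
  nlinarith [mul_lt_mul_of_pos_left hmid (sub_pos.mpr hst)]

lemma fab_half_strictMonoOn : StrictMonoOn (fab (1 / 2)) (Ici (-log 3)) := by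
  intro v hv w _ hvw
  simp only [fab_half_eq_cubic]
  have := cubic_lt_cubic_of_one_le (exp_pos _) ((neg_log_three_le_iff v).mp hv)
    (exp_lt_exp.mpr (div_lt_div_of_pos_right hvw two_pos))
  linarith

lemma fab_half_strictAntiOn : StrictAntiOn (fab (1 / 2)) (Iic (-log 3)) := by
  intro v _ w hw hvw
  simp only [fab_half_eq_cubic]
  have := cubic_lt_cubic_of_le_one (exp_pos _).le ((le_neg_log_three_iff w).mp hw)
    (exp_lt_exp.mpr (div_lt_div_of_pos_right hvw two_pos))
  linarith

section Viete

variable {θ x : ℝ}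

lemma exp_half_two_log_cos (hθ : 0 < cos θ) :
    exp (2 * log (2 / √3 * cos θ) / 2) = 2 / √3 * cos θ := by
  rw [mul_div_cancel_left₀ _ two_ne_zero, exp_log (by positivity)]

lemma three_mul_sq_viete : 3 * (2 / √3 * cos θ) ^ 2 = 4 * cos θ ^ 2 := by
  rw [mul_pow, div_pow, sq_sqrt zero_le_three]
  ring

lemma fab_half_two_log_cos (hθ : 0 < cos θ) (hx : cos (3 * θ) = 3 * √3 * x) :
    fab (1 / 2) (2 * log (2 / √3 * cos θ)) = x := by
  have h3 : √3 ^ 2 = 3 := sq_sqrt zero_le_three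
  rw [fab_half_eq_cubic, exp_half_two_log_cos hθ]
  rw [cos_three_mul] at hx
  field_simp
  linear_combination hx + (-cos θ - √3 * x) * h3

lemma neg_log_three_le_two_log_cos (hθ : 1 / 2 ≤ cos θ) :
    -log 3 ≤ 2 * log (2 / √3 * cos θ) := by
  rw [neg_log_three_le_iff, exp_half_two_log_cos (by linarith), three_mul_sq_viete]
  nlinarith

lemma two_log_cos_le_neg_log_three (hθ₀ : 0 < cos θ) (hθ : cos θ ≤ 1 / 2) :
    2 * log (2 / √3 * cos θ) ≤ -log 3 := by
  rw [le_neg_log_three_iff, exp_half_two_log_cos hθ₀, three_mul_sq_viete]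
  nlinarith

end Viete

section Branches

variable {x : ℝ}

lemma neg_one_le_three_mul_sqrt_three_mul (hx : -(√3 / 9) < x) : -1 ≤ 3 * √3 * x := by
  have h3 : √3 * √3 = 3 := mul_self_sqrt zero_le_three
  nlinarith [sqrt_nonneg 3]

lemma fab_half_principal_branch_formula (hx₁ : -(√3 / 9) < x) (hx₂ : x < √3 / 9) :
    -log 3 ≤ 2 * log (2 / √3 * cos (arccos (3 * √3 * x) / 3)) ∧
      fab (1 / 2) (2 * log (2 / √3 * cos (arccos (3 * √3 * x) / 3))) = x := by
  have h3 : √3 * √3 = 3 := mul_self_sqrt zero_le_three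
  set A := arccos (3 * √3 * x)
  have hcos : 1 / 2 ≤ cos (A / 3) := by
    rw [← cos_pi_div_three]
    exact cos_le_cos_of_nonneg_of_le_pi (by positivity [arccos_nonneg (3 * √3 * x)])
      (by linarith [pi_pos]) (by linarith [arccos_le_pi (3 * √3 * x)])
  refine ⟨neg_log_three_le_two_log_cos hcos, fab_half_two_log_cos (by linarith) ?_⟩
  rw [mul_div_cancel₀ _ three_ne_zero]
  exact cos_arccos (neg_one_le_three_mul_sqrt_three_mul hx₁) (by nlinarith [sqrt_nonneg 3])

/-- The second angle lies in `(3π/2, 5π/3]`, where `0 < cos ≤ 1/2`. -/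
lemma fab_half_lower_branch_formula (hx₁ : -(√3 / 9) < x) (hx₀ : x < 0) :
    2 * log (2 / √3 * cos ((arccos (3 * √3 * x) + 4 * π) / 3)) ≤ -log 3 ∧
      fab (1 / 2) (2 * log (2 / √3 * cos ((arccos (3 * √3 * x) + 4 * π) / 3))) = x := by
  have hy₀ : 3 * √3 * x < 0 := mul_neg_of_pos_of_neg (by positivity) hx₀
  set A := arccos (3 * √3 * x)
  have hA₁ : π / 2 < A := by
    rw [← not_le, arccos_le_pi_div_two, not_le]
    exact hy₀
  have hA₂ : A ≤ π := arccos_le_pi _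
  have hreflect : cos ((A + 4 * π) / 3) = cos (2 * π - (A + 4 * π) / 3) := by
    rw [cos_two_pi_sub]
  have hpos : 0 < cos ((A + 4 * π) / 3) := by
    rw [hreflect]
    exact cos_pos_of_mem_Ioo ⟨by linarith [pi_pos], by linarith⟩
  have hhalf : cos ((A + 4 * π) / 3) ≤ 1 / 2 := by
    rw [hreflect, ← cos_pi_div_three]
    exact cos_le_cos_of_nonneg_of_le_pi (by positivity) (by linarith) (by linarith)
  refine ⟨two_log_cos_le_neg_log_three hpos hhalf, fab_half_two_log_cos hpos ?_⟩
  rw [mul_div_cancel₀ _ three_ne_zero,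
    show A + 4 * π = A + (2 : ℕ) * (2 * π) by push_cast; ring, cos_add_nat_mul_two_pi]
  exact cos_arccos (neg_one_le_three_mul_sqrt_three_mul hx₁) (by linarith)

end Branches

/-- Explicit trigonometric formulas for the branches at `a = 1/2`
(where `M_{1/2} = −log 3` and `L_{1/2} = −√3/9`). -/
theorem stmt_10 (psi0 psi1 : ℝ → ℝ)
    (hpsi0 : ∀ x, La (1/2) ≤ x → Ma (1/2) ≤ psi0 x ∧ fab (1/2) (psi0 x) = x)
    (hpsi1 : ∀ x, La (1/2) ≤ x → x < 0 → psi1 x ≤ Ma (1/2) ∧ fab (1/2) (psi1 x) = x) :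
    (∀ x : ℝ, -(Real.sqrt 3 / 9) < x → x < Real.sqrt 3 / 9 →
      let w0 : ℝ := 2 * Real.log ((2 / Real.sqrt 3) *
        Real.cos (Real.arccos (3 * Real.sqrt 3 * x) / 3))
      psi0 x = w0 ∧ -Real.log 3 ≤ w0 ∧ Real.sinh (w0 / 2) * Real.exp w0 = x) ∧
    (∀ x : ℝ, -(Real.sqrt 3 / 9) < x → x < 0 →
      let wm : ℝ := 2 * Real.log ((2 / Real.sqrt 3) *
        Real.cos ((Real.arccos (3 * Real.sqrt 3 * x) + 4 * Real.pi) / 3))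
      psi1 x = wm ∧ wm ≤ -Real.log 3 ∧ Real.sinh (wm / 2) * Real.exp wm = x) := by
  rw [Ma_half, La_half] at *
  constructor
  · intro x hx₁ hx₂
    obtain ⟨hw, hfw⟩ := fab_half_principal_branch_formula hx₁ hx₂
    obtain ⟨hψ, hfψ⟩ := hpsi0 x hx₁.le
    refine ⟨fab_half_strictMonoOn.injOn hψ hw (hfψ.trans hfw.symm), hw, ?_⟩
    rwa [← fab_half_apply]
  · intro x hx₁ hx₀
    obtain ⟨hw, hfw⟩ := fab_half_lower_branch_formula hx₁ hx₀
    obtain ⟨hψ, hfψ⟩ := hpsi1 x hx₁.le hx₀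
    refine ⟨fab_half_strictAntiOn.injOn hψ hw (hfψ.trans hfw.symm), hw, ?_⟩
    rwa [← fab_half_apply]
end

section
/- Set b(a) = |a − 1/3|. (A) For every 0 < a < 1/3 and every y with 0 ≤ y ≤ b(a): (i) e^{2ay} − e^{(a−1)y} − (a+1)·y ≤ 0, and (ii) e^{2ay} − e^{(a−1)y} − (a+1)·y + (1/2)·(−3a² − 2a + 1)·y² ≥ 0. (B) For every 1/3 < a < 1 and every y with 0 ≤ y ≤ b(a): (1+a)·y ≤ e^{2ay} − e^{(a−1)y} ≤ 3·(1+a)·y. -/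
/-!
Write `u = 2ay` and `v = (a - 1)y`, so that `u - v = (1 + a)y` and
`(u² - v²)/2 = -(1/2)(-3a² - 2a + 1)y²`. For `u ≥ 0 ≥ v` the second-order Taylor
polynomial bounds `exp` from below at `u` and from above at `v`; this is (A)(ii), and it gives
the lower bound of (B) because `u² ≥ v²` once `a ≥ 1/3`. For (A)(i) the negative quadratic term
`-(1 - 3a)(1 + a)y²/2` absorbs the cubic Taylor remainders, since `y ≤ (1 - 3a)/3`.
For the upper bound of (B), `e^u - e^v = e^v (e^{(1+a)y} - 1) ≤ e^{(1+a)y} - 1` with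
`(1 + a)y ≤ 4/3`, and on `[0, 4/3]` the exponential lies below its chord, hence below `1 + 3t`
because `e^{4/3} ≤ 5`.
-/

open Real

lemma exp_le_quadratic_of_nonpos {x : ℝ} (hx : x ≤ 0) : exp x ≤ 1 + x + x ^ 2 / 2 := by
  have hderiv (t : ℝ) :
      HasDerivAt (fun t => exp t - (1 + t + t ^ 2 / 2)) (exp t - (1 + t)) t :=
    ((hasDerivAt_exp t).sub (((hasDerivAt_id t).const_add 1).add
      ((hasDerivAt_pow 2 t).div_const 2))).congr_deriv (by norm_num)
  have hmono := monotone_of_hasDerivAt_nonneg hderiv fun t => sub_nonneg.2 (by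
    linarith [add_one_le_exp t])
  simpa using hmono hx

lemma cubic_le_exp_of_nonpos {x : ℝ} (hx : x ≤ 0) : 1 + x + x ^ 2 / 2 + x ^ 3 / 6 ≤ exp x := by
  have hderiv (t : ℝ) : HasDerivAt (fun t => exp t - (1 + t + t ^ 2 / 2 + t ^ 3 / 6))
      (exp t - (1 + t + t ^ 2 / 2)) t :=
    ((hasDerivAt_exp t).sub ((((hasDerivAt_id t).const_add 1).add
      ((hasDerivAt_pow 2 t).div_const 2)).add ((hasDerivAt_pow 3 t).div_const 6))).congr_deriv
      (by norm_num; ring)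
  have hanti : AntitoneOn (fun t => exp t - (1 + t + t ^ 2 / 2 + t ^ 3 / 6)) (Set.Iic 0) :=
    antitoneOn_of_hasDerivWithinAt_nonpos (convex_Iic 0) (by fun_prop)
      (fun t _ => (hderiv t).hasDerivWithinAt) fun t ht => by
        rw [interior_Iic] at ht
        linarith [exp_le_quadratic_of_nonpos ht.le]
  simpa using hanti hx Set.self_mem_Iic hx

lemma exp_le_cubic_of_nonneg_of_le_one {x : ℝ} (h0 : 0 ≤ x) (h1 : x ≤ 1) :
    exp x ≤ 1 + x + x ^ 2 / 2 + 2 / 9 * x ^ 3 := by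
  have h := exp_bound' h0 h1 (n := 3) (by norm_num)
  norm_num [Finset.sum_range_succ, Nat.factorial] at h
  linarith

lemma exp_four_thirds_le_five : exp (4 / 3) ≤ 5 := by
  have h : exp (4 / 3) = exp 1 * exp (1 / 3) := by rw [← exp_add]; norm_num
  have h1 := exp_one_lt_d9
  have h2 := exp_bound_div_one_sub_of_interval (x := 1 / 3) (by norm_num) (by norm_num)
  rw [h]
  nlinarith [exp_pos 1, exp_pos (1 / 3)]

lemma exp_le_one_add_three_mul {t : ℝ} (h0 : 0 ≤ t) (h1 : t ≤ 4 / 3) : exp t ≤ 1 + 3 * t := by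
  have h := convexOn_exp.2 (Set.mem_univ 0) (Set.mem_univ (4 / 3))
    (by linarith : (0 : ℝ) ≤ 1 - 3 / 4 * t) (by linarith : (0 : ℝ) ≤ 3 / 4 * t) (by ring)
  simp only [smul_eq_mul, mul_zero, zero_add, exp_zero, mul_one] at h
  rw [show 3 / 4 * t * (4 / 3) = t by ring] at h
  nlinarith [exp_four_thirds_le_five]

lemma sub_add_sq_sub_sq_div_two_le_exp_sub_exp {u v : ℝ} (hu : 0 ≤ u) (hv : v ≤ 0) :
    u - v + (u ^ 2 - v ^ 2) / 2 ≤ exp u - exp v := by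
  linarith [quadratic_le_exp_of_nonneg hu, exp_le_quadratic_of_nonpos hv]

lemma exp_sub_exp_le_of_le_third {a y : ℝ} (ha : 0 ≤ a) (hy : 0 ≤ y) (hya : y ≤ 1 / 3 - a) :
    exp (2 * a * y) - exp ((a - 1) * y) ≤ (a + 1) * y := by
  have hu := exp_le_cubic_of_nonneg_of_le_one (x := 2 * a * y) (by positivity) (by nlinarith)
  have hv := cubic_le_exp_of_nonpos (x := (a - 1) * y) (by nlinarith)
  have hcoeff : y * (16 / 9 * a ^ 3 + (1 - a) ^ 3 / 6) ≤ (1 - 3 * a) * (1 + a) / 2 := by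
    nlinarith [pow_le_pow_left₀ ha (show a ≤ 1 / 3 by linarith) 3,
      pow_le_one₀ (show 0 ≤ 1 - a by linarith) (show 1 - a ≤ 1 by linarith) (n := 3)]
  nlinarith [mul_le_mul_of_nonneg_left hcoeff (sq_nonneg y)]

lemma exp_add_sub_exp_le {v s : ℝ} (hv : v ≤ 0) (hs : 0 ≤ s) (hs' : s ≤ 4 / 3) :
    exp (v + s) - exp v ≤ 3 * s := by
  have hexp_s := exp_le_one_add_three_mul hs hs'
  calc exp (v + s) - exp v = exp v * (exp s - 1) := by rw [exp_add]; ring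
    _ ≤ 1 * (exp s - 1) := by
        gcongr
        · linarith [one_le_exp hs]
        · exact exp_le_one_iff.2 hv
    _ ≤ 3 * s := by linarith

/-- Elementary exponential inequalities on `0 ≤ y ≤ b(a) = |a − 1/3|`, for
`0 < a < 1/3` and for `1/3 < a < 1`. -/
theorem stmt_14 :
    (∀ a : ℝ, 0 < a → a < 1/3 → ∀ y : ℝ, 0 ≤ y → y ≤ |a - 1/3| →
      Real.exp (2*a*y) - Real.exp ((a-1)*y) - (a+1)*y ≤ 0 ∧
      0 ≤ Real.exp (2*a*y) - Real.exp ((a-1)*y) - (a+1)*y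
            + (1/2) * (-3*a^2 - 2*a + 1) * y^2) ∧
    (∀ a : ℝ, 1/3 < a → a < 1 → ∀ y : ℝ, 0 ≤ y → y ≤ |a - 1/3| →
      (1+a)*y ≤ Real.exp (2*a*y) - Real.exp ((a-1)*y) ∧
      Real.exp (2*a*y) - Real.exp ((a-1)*y) ≤ 3*(1+a)*y) := by
  refine ⟨fun a ha ha' y hy hyb => ?_, fun a ha ha' y hy hyb => ?_⟩
  all_goals
    have hquad := sub_add_sq_sub_sq_div_two_le_exp_sub_exp
      (u := 2 * a * y) (v := (a - 1) * y) (by positivity) (by nlinarith)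
  · rw [abs_of_neg (by linarith), neg_sub] at hyb
    refine ⟨by linarith [exp_sub_exp_le_of_le_third ha.le hy hyb], by linarith⟩
  · rw [abs_of_pos (by linarith)] at hyb
    have hsq : 0 ≤ (2 * a * y) ^ 2 - ((a - 1) * y) ^ 2 := by
      nlinarith [mul_nonneg (mul_nonneg (sq_nonneg y) (by linarith : (0 : ℝ) ≤ 3 * a - 1))
        (by linarith : (0 : ℝ) ≤ 1 + a)]
    refine ⟨by linarith, ?_⟩
    have hstep := exp_add_sub_exp_le (v := (a - 1) * y) (s := (1 + a) * y)
      (by nlinarith) (by positivity) (by nlinarith)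
    rw [show (a - 1) * y + (1 + a) * y = 2 * a * y by ring] at hstep
    linarith
end

section
/- Fix 0 < a < 1. For every x > 0: (i) e^{−2ax} − e^{(−a−1)x} − (1−a)·x ≤ 0, and (ii) e^{−2ax} − e^{(−a−1)x} − (1−a)·x − (1/2)·(3a² − 2a − 1)·x² ≥ 0. -/
/-! With `p = 2 a x` and `q = (1 - a) x`, both nonnegative, the middle difference factors as
`e^{-2ax} - e^{-(a+1)x} = e^{-p} (1 - e^{-q})`, and the quadratic coefficient is
`-(1/2)(3a² - 2a - 1) x² = q²/2 + p q`. Both claims then follow from `1 - p ≤ e^{-p} ≤ 1`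
and `q - q²/2 ≤ 1 - e^{-q} ≤ q`. -/

namespace Real

/-- Dividing the Taylor bound `1 + q + q²/2 ≤ e^q` into `(1 - q + q²/2)(1 + q + q²/2) = 1 + q⁴/4`. -/
lemma exp_neg_le_one_sub_add_sq_div_two {q : ℝ} (hq : 0 ≤ q) : exp (-q) ≤ 1 - q + q ^ 2 / 2 := by
  have hpos : 0 < 1 + q + q ^ 2 / 2 := by positivity
  refine le_of_mul_le_mul_right ?_ hpos
  calc exp (-q) * (1 + q + q ^ 2 / 2)
      ≤ exp (-q) * exp q := mul_le_mul_of_nonneg_left (quadratic_le_exp_of_nonneg hq) (exp_pos _).le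
    _ = 1 := by rw [← exp_add, neg_add_cancel, exp_zero]
    _ ≤ (1 - q + q ^ 2 / 2) * (1 + q + q ^ 2 / 2) := by nlinarith [sq_nonneg (q ^ 2)]

lemma exp_neg_mul_one_sub_exp_neg_le {p q : ℝ} (hp : 0 ≤ p) (hq : 0 ≤ q) :
    exp (-p) * (1 - exp (-q)) ≤ q := by
  have h₁ : exp (-p) ≤ 1 := exp_le_one_iff.mpr (neg_nonpos.mpr hp)
  have h₂ : 0 ≤ 1 - exp (-q) := sub_nonneg.mpr (exp_le_one_iff.mpr (neg_nonpos.mpr hq))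
  calc exp (-p) * (1 - exp (-q)) ≤ 1 - exp (-q) := mul_le_of_le_one_left h₂ h₁
    _ ≤ q := by linarith [one_sub_le_exp_neg q]

lemma sub_sub_mul_le_exp_neg_mul_one_sub_exp_neg {p q : ℝ} (hp : 0 ≤ p) (hq : 0 ≤ q) :
    q - q ^ 2 / 2 - p * q ≤ exp (-p) * (1 - exp (-q)) := by
  have hw₀ : 0 ≤ 1 - exp (-q) := sub_nonneg.mpr (exp_le_one_iff.mpr (neg_nonpos.mpr hq))
  have hw₁ : 1 - exp (-q) ≤ q := by linarith [one_sub_le_exp_neg q]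
  have hw₂ : q - q ^ 2 / 2 ≤ 1 - exp (-q) := by linarith [exp_neg_le_one_sub_add_sq_div_two hq]
  calc q - q ^ 2 / 2 - p * q ≤ (1 - p) * (1 - exp (-q)) := by
        linarith [mul_le_mul_of_nonneg_left hw₁ hp]
    _ ≤ exp (-p) * (1 - exp (-q)) :=
        mul_le_mul_of_nonneg_right (by linarith [one_sub_le_exp_neg p]) hw₀

end Real

/-- Elementary exponential inequalities for all `x > 0` and `0 < a < 1`. -/
theorem stmt_16 (a : ℝ) (ha0 : 0 < a) (ha1 : a < 1) :
    ∀ x : ℝ, 0 < x →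
      Real.exp (-2*a*x) - Real.exp ((-a-1)*x) - (1-a)*x ≤ 0 ∧
      0 ≤ Real.exp (-2*a*x) - Real.exp ((-a-1)*x) - (1-a)*x
            - (1/2) * (3*a^2 - 2*a - 1) * x^2 := by
  intro x hx
  have hp : 0 ≤ 2 * a * x := by positivity
  have hq : 0 ≤ (1 - a) * x := mul_nonneg (by linarith) hx.le
  have hfactor : Real.exp (-2*a*x) - Real.exp ((-a-1)*x)
      = Real.exp (-(2 * a * x)) * (1 - Real.exp (-((1 - a) * x))) := by
    rw [mul_sub, mul_one, ← Real.exp_add]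
    ring_nf
  rw [hfactor]
  exact ⟨by linarith [Real.exp_neg_mul_one_sub_exp_neg_le hp hq],
    by linarith [Real.sub_sub_mul_le_exp_neg_mul_one_sub_exp_neg hp hq]⟩
end
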